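/- Let M > 1, n ≥ 1 a natural number, and v ≥ 0 with (n−1)·M·v ≤ (M−1)·n. Define t(α) = (M−1)Mnα² + (−M(1+M)v + n(2 + Mv + M²v))α − (1+M)n. Then t(0) = −(1+M)n < 0, t(1) = n(M−1)² + (n−1)(1+M)Mv > 0, and t(1/M) = ((M+1)/M)·((1−M)n + (n−1)Mv) ≤ 0; consequently the unique positive root of t lies in the interval [1/M, 1). -/

import Mathlib

/-!
The leading coefficient of `t` is positive and its constant term negative, so by Vieta the two
roots have negative product: exactly one is positive. The sign change `t(1/M) ≤ 0 < t(1)`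
places a root in `[1/M, 1)` by the intermediate value theorem, and it must be that one.
-/

/-- The auxiliary quadratic `t(α)` from the two-step stochastic stepsize
schedule analysis. -/
noncomputable def tquad (M n v α : ℝ) : ℝ :=
  (M - 1) * M * n * α ^ 2
    + (-(M * (1 + M) * v) + n * (2 + M * v + M ^ 2 * v)) * α
    - (1 + M) * n

lemma eq_of_quadratic_eq_zero_of_pos {a b c x y : ℝ} (ha : 0 < a) (hc : c < 0)
    (hx : 0 < x) (hy : 0 < y)
    (hxr : a * x ^ 2 + b * x + c = 0) (hyr : a * y ^ 2 + b * y + c = 0) :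
    x = y := by
  by_contra hne
  have hsum : a * (x + y) + b = 0 := by
    have hfactor : (x - y) * (a * (x + y) + b) = 0 := by linear_combination hxr - hyr
    exact (mul_eq_zero.mp hfactor).resolve_left (sub_ne_zero.mpr hne)
  have hprod : c = a * x * y := by linear_combination hxr - x * hsum
  nlinarith [mul_pos (mul_pos ha hx) hy]

section tquad

variable {M n v : ℝ}

lemma tquad_zero : tquad M n v 0 = -((1 + M) * n) := by
  simp [tquad]

lemma tquad_one : tquad M n v 1 = n * (M - 1) ^ 2 + (n - 1) * (1 + M) * M * v := by
  simp only [tquad]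
  ring

lemma tquad_one_div (hM : M ≠ 0) :
    tquad M n v (1 / M) = (M + 1) / M * ((1 - M) * n + (n - 1) * M * v) := by
  simp only [tquad]
  field_simp
  ring

lemma continuous_tquad : Continuous (tquad M n v) := by
  unfold tquad
  fun_prop

lemma tquad_one_pos (hM : 1 < M) (hn : 1 ≤ n) (hv : 0 ≤ v) : 0 < tquad M n v 1 := by
  rw [tquad_one]
  have hsq : 0 < n * (M - 1) ^ 2 := by nlinarith
  have hrest : 0 ≤ (n - 1) * (1 + M) * M * v := by
    have : 0 ≤ n - 1 := by linarith
    positivity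
  linarith

lemma tquad_one_div_nonpos (hM : 0 < M) (hbound : (n - 1) * M * v ≤ (M - 1) * n) :
    tquad M n v (1 / M) ≤ 0 := by
  rw [tquad_one_div hM.ne']
  exact mul_nonpos_of_nonneg_of_nonpos (by positivity) (by linarith)

lemma exists_tquad_eq_zero_mem_Ico (hM : 1 < M) (hn : 1 ≤ n) (hv : 0 ≤ v)
    (hbound : (n - 1) * M * v ≤ (M - 1) * n) :
    ∃ α ∈ Set.Ico (1 / M) 1, tquad M n v α = 0 :=
  intermediate_value_Ico ((div_le_one (by linarith)).mpr hM.le)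
    continuous_tquad.continuousOn
    ⟨tquad_one_div_nonpos (by linarith) hbound, tquad_one_pos hM hn hv⟩

lemma eq_of_tquad_eq_zero (hM : 1 < M) (hn : 0 < n) {α β : ℝ} (hα : 0 < α) (hβ : 0 < β)
    (hαr : tquad M n v α = 0) (hβr : tquad M n v β = 0) : α = β :=
  eq_of_quadratic_eq_zero_of_pos (a := (M - 1) * M * n)
    (b := -(M * (1 + M) * v) + n * (2 + M * v + M ^ 2 * v)) (c := -((1 + M) * n))
    (by have := sub_pos.mpr hM; positivity) (by nlinarith) hα hβ
    (by rw [← hαr, tquad]; ring) (by rw [← hβr, tquad]; ring)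

end tquad

theorem stmt_11 (M : ℝ) (n : ℕ) (v : ℝ)
    (hM : 1 < M) (hn : 1 ≤ n) (hv : 0 ≤ v)
    (hbound : ((n : ℝ) - 1) * M * v ≤ (M - 1) * n) :
    (tquad M (n : ℝ) v 0 = -((1 + M) * (n : ℝ)) ∧ tquad M (n : ℝ) v 0 < 0) ∧
    (tquad M (n : ℝ) v 1
        = (n : ℝ) * (M - 1) ^ 2 + ((n : ℝ) - 1) * (1 + M) * M * v ∧
      0 < tquad M (n : ℝ) v 1) ∧
    (tquad M (n : ℝ) v (1 / M)
        = (M + 1) / M * ((1 - M) * (n : ℝ) + ((n : ℝ) - 1) * M * v) ∧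
      tquad M (n : ℝ) v (1 / M) ≤ 0) ∧
    (∃! α : ℝ, 0 < α ∧ tquad M (n : ℝ) v α = 0) ∧
    (∀ α : ℝ, 0 < α → tquad M (n : ℝ) v α = 0 → α ∈ Set.Ico (1 / M) 1) := by
  have hM0 : 0 < M := by linarith
  have hn1 : (1 : ℝ) ≤ n := by exact_mod_cast hn
  have hn0 : (0 : ℝ) < n := by linarith
  obtain ⟨α, hαI, hαr⟩ := exists_tquad_eq_zero_mem_Ico hM hn1 hv hbound
  have hα : 0 < α := lt_of_lt_of_le (by positivity) hαI.1
  have huniq : ∀ β, 0 < β → tquad M n v β = 0 → β = α :=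
    fun β hβ hβr => eq_of_tquad_eq_zero hM hn0 hβ hα hβr hαr
  refine ⟨⟨tquad_zero, by rw [tquad_zero]; nlinarith⟩, ⟨tquad_one, tquad_one_pos hM hn1 hv⟩,
    ⟨tquad_one_div hM0.ne', tquad_one_div_nonpos hM0 hbound⟩,
    ⟨α, ⟨hα, hαr⟩, fun β hβ => huniq β hβ.1 hβ.2⟩, ?_⟩
  intro β hβ hβr
  rw [huniq β hβ hβr]
  exact hαI
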